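/- Fix a₁, a₂ > 0, ν > 0, and data ỹ ∈ ℝ⁴ with (ỹ₁, ỹ₃) ≠ (0,0), (ỹ₂, ỹ₄) ≠ (0,0), and A ≠ 0. Then the weighted cost evaluated at the two critical points satisfies ∑ᵢ λᵢ·(ε^+ᵢ)² = (ν/(ν+1))·α^+ and ∑ᵢ λᵢ·(ε^−ᵢ)² = (ν/(ν+1))·α^−. -/
import Mathlib


open Matrix Real

noncomputable section

/-- q = (a₁, −a₁, a₂, −a₂). -/
def qv (a₁ a₂ : ℝ) : Fin 4 → ℝ := ![a₁, -a₁, a₂, -a₂]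

/-- The weights λ = (a₁, νa₁, a₂, νa₂). -/
def lv (a₁ a₂ ν : ℝ) : Fin 4 → ℝ := ![a₁, ν * a₁, a₂, ν * a₂]

/-- A = a₁ỹ₁² − ν²a₁ỹ₂² + a₂ỹ₃² − ν²a₂ỹ₄². -/
def Aq (a₁ a₂ ν : ℝ) (y : Fin 4 → ℝ) : ℝ :=
  a₁ * y 0 ^ 2 - ν ^ 2 * a₁ * y 1 ^ 2 + a₂ * y 2 ^ 2 - ν ^ 2 * a₂ * y 3 ^ 2

/-- B = 2ν(a₁ỹ₁² + νa₁ỹ₂² + a₂ỹ₃² + νa₂ỹ₄²). -/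
def Bq (a₁ a₂ ν : ℝ) (y : Fin 4 → ℝ) : ℝ :=
  2 * ν * (a₁ * y 0 ^ 2 + ν * a₁ * y 1 ^ 2 + a₂ * y 2 ^ 2 + ν * a₂ * y 3 ^ 2)

/-- C = ν²(a₁ỹ₁² − a₁ỹ₂² + a₂ỹ₃² − a₂ỹ₄²). -/
def Cq (a₁ a₂ ν : ℝ) (y : Fin 4 → ℝ) : ℝ :=
  ν ^ 2 * (a₁ * y 0 ^ 2 - a₁ * y 1 ^ 2 + a₂ * y 2 ^ 2 - a₂ * y 3 ^ 2)

/-- Δ = B² − 4AC. -/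
def Dq (a₁ a₂ ν : ℝ) (y : Fin 4 → ℝ) : ℝ :=
  Bq a₁ a₂ ν y ^ 2 - 4 * Aq a₁ a₂ ν y * Cq a₁ a₂ ν y

/-- s⁺ = (−B + √Δ)/(2A). -/
def sP (a₁ a₂ ν : ℝ) (y : Fin 4 → ℝ) : ℝ :=
  (-Bq a₁ a₂ ν y + Real.sqrt (Dq a₁ a₂ ν y)) / (2 * Aq a₁ a₂ ν y)

/-- s⁻ = (−B − √Δ)/(2A). -/
def sM (a₁ a₂ ν : ℝ) (y : Fin 4 → ℝ) : ℝ :=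
  (-Bq a₁ a₂ ν y - Real.sqrt (Dq a₁ a₂ ν y)) / (2 * Aq a₁ a₂ ν y)

/-- ε⁺ᵢ = s⁺qᵢỹᵢ/(λᵢ − s⁺qᵢ). -/
def eP (a₁ a₂ ν : ℝ) (y : Fin 4 → ℝ) : Fin 4 → ℝ := fun i =>
  sP a₁ a₂ ν y * qv a₁ a₂ i * y i / (lv a₁ a₂ ν i - sP a₁ a₂ ν y * qv a₁ a₂ i)

/-- ε⁻ᵢ = s⁻qᵢỹᵢ/(λᵢ − s⁻qᵢ). -/
def eM (a₁ a₂ ν : ℝ) (y : Fin 4 → ℝ) : Fin 4 → ℝ := fun i =>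
  sM a₁ a₂ ν y * qv a₁ a₂ i * y i / (lv a₁ a₂ ν i - sM a₁ a₂ ν y * qv a₁ a₂ i)

/-- ε is a critical point of the weighted triangulation problem with weights l:
the constraint ∑ᵢ qᵢ(ỹᵢ + εᵢ)² = 0 holds and there is a Lagrange multiplier s with
lᵢεᵢ = s·qᵢ·(ỹᵢ + εᵢ) for all i. -/
def IsCrit (a₁ a₂ : ℝ) (l : Fin 4 → ℝ) (y ε : Fin 4 → ℝ) : Prop :=
  (∑ i, qv a₁ a₂ i * (y i + ε i) ^ 2 = 0) ∧
    ∃ s : ℝ, ∀ i, l i * ε i = s * qv a₁ a₂ i * (y i + ε i)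

end

/-- α⁺ = (√(a₁ỹ₁² + a₂ỹ₃²) − √(a₁ỹ₂² + a₂ỹ₄²))². -/
noncomputable def alphaP (a₁ a₂ : ℝ) (y : Fin 4 → ℝ) : ℝ :=
  (Real.sqrt (a₁ * y 0 ^ 2 + a₂ * y 2 ^ 2) - Real.sqrt (a₁ * y 1 ^ 2 + a₂ * y 3 ^ 2)) ^ 2

/-- α⁻ = (√(a₁ỹ₁² + a₂ỹ₃²) + √(a₁ỹ₂² + a₂ỹ₄²))². -/
noncomputable def alphaM (a₁ a₂ : ℝ) (y : Fin 4 → ℝ) : ℝ :=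
  (Real.sqrt (a₁ * y 0 ^ 2 + a₂ * y 2 ^ 2) + Real.sqrt (a₁ * y 1 ^ 2 + a₂ * y 3 ^ 2)) ^ 2

set_option maxHeartbeats 1000000 in
/-- the weighted cost at the two critical points satisfies
∑λᵢ(ε⁺ᵢ)² = (ν/(ν+1))·α⁺ and ∑λᵢ(ε⁻ᵢ)² = (ν/(ν+1))·α⁻. -/
theorem weighted_cost_at_critical_points (a₁ a₂ ν : ℝ) (y : Fin 4 → ℝ)
    (ha₁ : 0 < a₁) (ha₂ : 0 < a₂) (hν : 0 < ν)
    (h13 : ¬(y 0 = 0 ∧ y 2 = 0)) (h24 : ¬(y 1 = 0 ∧ y 3 = 0))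
    (hA : Aq a₁ a₂ ν y ≠ 0) :
    (∑ i, lv a₁ a₂ ν i * eP a₁ a₂ ν y i ^ 2 = ν / (ν + 1) * alphaP a₁ a₂ y) ∧
    (∑ i, lv a₁ a₂ ν i * eM a₁ a₂ ν y i ^ 2 = ν / (ν + 1) * alphaM a₁ a₂ y) := by
  have hP : 0 < a₁ * y 0 ^ 2 + a₂ * y 2 ^ 2 := by
    rcases not_and_or.mp h13 with h | h
    · have h0 : 0 < y 0 ^ 2 := by positivity
      nlinarith [sq_nonneg (y 2)]
    · have h0 : 0 < y 2 ^ 2 := by positivity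
      nlinarith [sq_nonneg (y 0)]
  have hQ : 0 < a₁ * y 1 ^ 2 + a₂ * y 3 ^ 2 := by
    rcases not_and_or.mp h24 with h | h
    · have h0 : 0 < y 1 ^ 2 := by positivity
      nlinarith [sq_nonneg (y 3)]
    · have h0 : 0 < y 3 ^ 2 := by positivity
      nlinarith [sq_nonneg (y 1)]
  obtain ⟨p, hp_def⟩ : ∃ p, p = Real.sqrt (a₁ * y 0 ^ 2 + a₂ * y 2 ^ 2) := ⟨_, rfl⟩
  obtain ⟨q, hq_def⟩ : ∃ q, q = Real.sqrt (a₁ * y 1 ^ 2 + a₂ * y 3 ^ 2) := ⟨_, rfl⟩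
  have hp : 0 < p := by rw [hp_def]; exact Real.sqrt_pos.mpr hP
  have hq : 0 < q := by rw [hq_def]; exact Real.sqrt_pos.mpr hQ
  have hp2 : p ^ 2 = a₁ * y 0 ^ 2 + a₂ * y 2 ^ 2 := by
    rw [hp_def]; exact Real.sq_sqrt hP.le
  have hq2 : q ^ 2 = a₁ * y 1 ^ 2 + a₂ * y 3 ^ 2 := by
    rw [hq_def]; exact Real.sq_sqrt hQ.le
  have hppq : (0:ℝ) < p + ν * q := by positivity
  have hAeq : Aq a₁ a₂ ν y = (p - ν * q) * (p + ν * q) := by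
    unfold Aq; linear_combination -hp2 + ν ^ 2 * hq2
  have hpmq : p - ν * q ≠ 0 := by
    intro h; exact hA (by rw [hAeq, h, zero_mul])
  have hBeq : Bq a₁ a₂ ν y = 2 * ν * (p ^ 2 + ν * q ^ 2) := by
    unfold Bq; linear_combination (-2 * ν) * hp2 + (-2 * ν ^ 2) * hq2
  have hDeq : Dq a₁ a₂ ν y = (2 * ν * (ν + 1) * p * q) ^ 2 := by
    unfold Dq Aq Bq Cq
    linear_combination (-(4 * ν ^ 2 * (ν + 1) ^ 2 * (a₁ * y 1 ^ 2 + a₂ * y 3 ^ 2))) * hp2 +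
      (-(4 * ν ^ 2 * (ν + 1) ^ 2 * p ^ 2)) * hq2
  have hsqrtD : Real.sqrt (Dq a₁ a₂ ν y) = 2 * ν * (ν + 1) * p * q := by
    rw [hDeq, Real.sqrt_sq (by positivity)]
  have hν1 : (0:ℝ) < 1 + ν := by positivity
  have hsP : sP a₁ a₂ ν y = ν * (q - p) / (p + ν * q) := by
    unfold sP
    rw [hsqrtD, hBeq, hAeq]
    field_simp
    ring
  have hsM : sM a₁ a₂ ν y = -(ν * (p + q)) / (p - ν * q) := by
    unfold sM
    rw [hsqrtD, hBeq, hAeq]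
    field_simp
    ring
  have h1P : 1 - sP a₁ a₂ ν y = (1 + ν) * p / (p + ν * q) := by
    rw [hsP]; field_simp; ring
  have h2P : ν + sP a₁ a₂ ν y = ν * (1 + ν) * q / (p + ν * q) := by
    rw [hsP]; field_simp; ring
  have h1M : 1 - sM a₁ a₂ ν y = (1 + ν) * p / (p - ν * q) := by
    rw [hsM]; field_simp; ring
  have h2M : ν + sM a₁ a₂ ν y = -(ν * (1 + ν) * q) / (p - ν * q) := by
    rw [hsM]; field_simp; ring
  have h1P' : 1 - sP a₁ a₂ ν y ≠ 0 := by rw [h1P]; positivity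
  have h2P' : ν + sP a₁ a₂ ν y ≠ 0 := by rw [h2P]; positivity
  have h1M' : 1 - sM a₁ a₂ ν y ≠ 0 := by
    rw [h1M]; exact div_ne_zero (by positivity) hpmq
  have h2M' : ν + sM a₁ a₂ ν y ≠ 0 := by
    rw [h2M]
    exact div_ne_zero (neg_ne_zero.mpr (by positivity)) hpmq
  have hαP : alphaP a₁ a₂ y = (p - q) ^ 2 := by
    unfold alphaP; rw [← hp_def, ← hq_def]
  have hαM : alphaM a₁ a₂ y = (p + q) ^ 2 := by
    unfold alphaM; rw [← hp_def, ← hq_def]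
  have key : ∀ s : ℝ, 1 - s ≠ 0 → ν + s ≠ 0 →
      (∑ i, lv a₁ a₂ ν i *
          (s * qv a₁ a₂ i * y i / (lv a₁ a₂ ν i - s * qv a₁ a₂ i)) ^ 2)
        = s ^ 2 * ((a₁ * y 0 ^ 2 + a₂ * y 2 ^ 2) / (1 - s) ^ 2
            + ν * (a₁ * y 1 ^ 2 + a₂ * y 3 ^ 2) / (ν + s) ^ 2) := by
    intro s h1 h2
    have d1 : a₁ - s * a₁ ≠ 0 := by
      rw [show a₁ - s * a₁ = a₁ * (1 - s) from by ring]
      exact mul_ne_zero ha₁.ne' h1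
    have d2 : ν * a₁ - s * -a₁ ≠ 0 := by
      rw [show ν * a₁ - s * -a₁ = a₁ * (ν + s) from by ring]
      exact mul_ne_zero ha₁.ne' h2
    have d3 : a₂ - s * a₂ ≠ 0 := by
      rw [show a₂ - s * a₂ = a₂ * (1 - s) from by ring]
      exact mul_ne_zero ha₂.ne' h1
    have d4 : ν * a₂ - s * -a₂ ≠ 0 := by
      rw [show ν * a₂ - s * -a₂ = a₂ * (ν + s) from by ring]
      exact mul_ne_zero ha₂.ne' h2
    rw [Fin.sum_univ_four]
    simp only [lv, qv, Matrix.cons_val_zero, Matrix.cons_val_one, Matrix.head_cons,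
      Matrix.cons_val_two, Matrix.tail_cons, Matrix.cons_val_three]
    rw [show a₁ - s * a₁ = a₁ * (1 - s) from by ring,
      show ν * a₁ - s * -a₁ = a₁ * (ν + s) from by ring,
      show a₂ - s * a₂ = a₂ * (1 - s) from by ring,
      show ν * a₂ - s * -a₂ = a₂ * (ν + s) from by ring,
      show s * a₁ * y 0 = a₁ * (s * y 0) from by ring,
      show s * -a₁ * y 1 = a₁ * (-(s * y 1)) from by ring,
      show s * a₂ * y 2 = a₂ * (s * y 2) from by ring,
      show s * -a₂ * y 3 = a₂ * (-(s * y 3)) from by ring,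
      mul_div_mul_left _ _ ha₁.ne', mul_div_mul_left _ _ ha₁.ne',
      mul_div_mul_left _ _ ha₂.ne', mul_div_mul_left _ _ ha₂.ne']
    field_simp
    ring
  constructor
  · have h := key (sP a₁ a₂ ν y) h1P' h2P'
    simp only [eP]
    rw [h, hαP, h1P, h2P, hsP, ← hp2, ← hq2]
    field_simp
    ring
  · have h := key (sM a₁ a₂ ν y) h1M' h2M'
    simp only [eM]
    rw [h, hαM, h1M, h2M, hsM, ← hp2, ← hq2]
    field_simp
    ring
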